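/- Let φ be a Bernstein function with zero killing and zero drift, φ(λ) = ∫_{(0,∞)}(1 - e^{-λt}) μ(dt), and H(λ) = φ(λ) - λφ'(λ). If there exist C_U > 0, δ > 0, λ_U ≥ 0 with H(λx)/H(λ) ≤ C_U x^δ for all λ > λ_U and x ≥ 1, then φ(λx)/φ(λ) ≤ C_U x^δ for all λ > λ_U and x ≥ 1. -/

import Mathlib

open MeasureTheory Set Real Filter Topology

/-!
Since `(φ(λ)/λ)' = -H(λ)/λ²`, the function `F(u) = (φ(ux) - K φ(u))/u` has derivative
`(K H(u) - H(ux))/u²`, which is nonnegative when `H(ux) ≤ K H(u)` with `K = C_U x^δ`.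
So `F` is nondecreasing on `(λ_U, ∞)`; zero drift means `φ(λ)/λ → 0`, hence `F → 0` and `F ≤ 0`.
This is the differential form of `φ(λ)/λ = ∫_λ^∞ H(s)/s² ds`.
Differentiability of `φ` and `φ(λ)/λ → 0` come from dominated differentiation and convergence,
with dominating functions multiples of `min 1 t`, which is `μ`-integrable on `(0, ∞)`.
-/

lemma one_sub_exp_neg_nonneg {u : ℝ} (hu : 0 ≤ u) : 0 ≤ 1 - exp (-u) := by
  linarith [exp_le_one_iff.mpr (neg_nonpos.mpr hu)]

lemma one_sub_exp_neg_le_min (u : ℝ) : 1 - exp (-u) ≤ min 1 u :=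
  le_min (by linarith [exp_pos (-u)]) (by linarith [add_one_le_exp (-u)])

lemma min_one_mul_le {t : ℝ} (l : ℝ) (ht : 0 ≤ t) :
    min 1 (l * t) ≤ max 1 l * min 1 t := by
  rcases le_total t 1 with h | h
  · rw [min_eq_right h]
    exact (min_le_right _ _).trans (mul_le_mul_of_nonneg_right (le_max_right 1 l) ht)
  · rw [min_eq_left h, mul_one]
    exact (min_le_left _ _).trans (le_max_left 1 l)

lemma mul_exp_neg_mul_le {c t : ℝ} (hc : 0 < c) (ht : 0 ≤ t) :
    t * exp (-(c * t)) ≤ max 1 c⁻¹ * min 1 t := by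
  rcases le_total t 1 with h | h
  · rw [min_eq_right h]
    have : exp (-(c * t)) ≤ 1 := exp_le_one_iff.mpr (by nlinarith)
    nlinarith [le_max_left 1 c⁻¹]
  · rw [min_eq_left h, mul_one]
    have h1 : c * t * exp (-(c * t)) ≤ 1 :=
      (mul_exp_neg_le_exp_neg_one _).trans (exp_le_one_iff.mpr (by norm_num))
    have h2 : t * exp (-(c * t)) ≤ c⁻¹ := by
      rw [← one_div, le_div_iff₀ hc]; linarith
    exact h2.trans (le_max_right _ _)

noncomputable def bernsteinFun (μ : Measure ℝ) (l : ℝ) : ℝ :=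
  ∫ t in Ioi (0:ℝ), (1 - exp (-(l * t))) ∂μ

section
variable {μ : Measure ℝ}

lemma integrableOn_min_one_of_lintegral_lt_top
    (hμ : ∫⁻ t in Ioi (0:ℝ), ENNReal.ofReal (min 1 t) ∂μ < ⊤) :
    IntegrableOn (fun t => min 1 t) (Ioi 0) μ := by
  refine (lintegral_ofReal_ne_top_iff_integrable (by fun_prop) ?_).mp hμ.ne
  filter_upwards [ae_restrict_mem measurableSet_Ioi] with t ht
  exact le_min zero_le_one (le_of_lt ht)

lemma integrableOn_one_sub_exp_neg_mul (hμ : IntegrableOn (fun t => min 1 t) (Ioi 0) μ)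
    {l : ℝ} (hl : 0 ≤ l) : IntegrableOn (fun t => 1 - exp (-(l * t))) (Ioi 0) μ := by
  refine (hμ.const_mul (max 1 l)).mono' (by fun_prop) ?_
  filter_upwards [ae_restrict_mem measurableSet_Ioi] with t (ht : 0 < t)
  have hlt : 0 ≤ l * t := by positivity
  rw [norm_of_nonneg (one_sub_exp_neg_nonneg hlt)]
  exact (one_sub_exp_neg_le_min _).trans (min_one_mul_le l ht.le)

lemma hasDerivAt_bernsteinFun (hμ : IntegrableOn (fun t => min 1 t) (Ioi 0) μ)
    {l : ℝ} (hl : 0 < l) :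
    HasDerivAt (bernsteinFun μ) (∫ t in Ioi (0:ℝ), t * exp (-(l * t)) ∂μ) l := by
  have hderiv : ∀ z t : ℝ, HasDerivAt (fun z => 1 - exp (-(z * t))) (t * exp (-(z * t))) z :=
    fun z t => by
      simpa [mul_comm] using ((hasDerivAt_mul_const t).neg.exp.const_sub 1 : HasDerivAt _ _ z)
  refine (hasDerivAt_integral_of_dominated_loc_of_deriv_le (μ := μ.restrict (Ioi 0))
    (F := fun z t => 1 - exp (-(z * t))) (Ioi_mem_nhds (half_lt_self hl))
    (.of_forall fun z => by fun_prop) (integrableOn_one_sub_exp_neg_mul hμ hl.le) (by fun_prop)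
    ?_ (hμ.const_mul (max 1 (l / 2)⁻¹)) (.of_forall fun t z _ => hderiv z t)).2
  filter_upwards [ae_restrict_mem measurableSet_Ioi] with t (ht : 0 < t) z (hz : l / 2 < z)
  rw [norm_of_nonneg (by positivity)]
  calc t * exp (-(z * t)) ≤ t * exp (-(l / 2 * t)) := by gcongr
    _ ≤ max 1 (l / 2)⁻¹ * min 1 t := mul_exp_neg_mul_le (by positivity) ht.le

lemma tendsto_bernsteinFun_div_atTop (hμ : IntegrableOn (fun t => min 1 t) (Ioi 0) μ) :
    Tendsto (fun l => bernsteinFun μ l / l) atTop (𝓝 0) := by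
  have hdiv : ∀ l, bernsteinFun μ l / l = ∫ t in Ioi (0:ℝ), (1 - exp (-(l * t))) / l ∂μ :=
    fun l => (integral_div _ _).symm
  simp_rw [hdiv]
  have := tendsto_integral_filter_of_dominated_convergence (μ := μ.restrict (Ioi 0))
    (F := fun l t => (1 - exp (-(l * t))) / l) (f := fun _ => 0) (l := atTop) _
    (.of_forall fun l => by fun_prop) ?_ hμ ?_
  · simpa using this
  · filter_upwards [eventually_ge_atTop 1] with l hl
    filter_upwards [ae_restrict_mem measurableSet_Ioi] with t (ht : 0 < t)
    have hlt : 0 ≤ l * t := by positivity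
    have hl0 : 0 < l := by linarith
    rw [norm_of_nonneg (div_nonneg (one_sub_exp_neg_nonneg hlt) hl0.le), div_le_iff₀ hl0]
    calc 1 - exp (-(l * t)) ≤ max 1 l * min 1 t :=
          (one_sub_exp_neg_le_min _).trans (min_one_mul_le l ht.le)
      _ = min 1 t * l := by rw [max_eq_right hl, mul_comm]
  · filter_upwards [ae_restrict_mem measurableSet_Ioi] with t (ht : 0 < t)
    have hexp : Tendsto (fun l => exp (-(l * t))) atTop (𝓝 0) :=
      tendsto_exp_atBot.comp (tendsto_neg_atTop_atBot.comp (tendsto_id.atTop_mul_const ht))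
    simpa using (tendsto_const_nhds.sub hexp).div_atTop tendsto_id

end

lemma nonpos_of_deriv_nonneg_of_tendsto_zero {F F' : ℝ → ℝ} {a : ℝ}
    (hF : ∀ u > a, HasDerivAt F (F' u) u) (hF' : ∀ u > a, 0 ≤ F' u)
    (hlim : Tendsto F atTop (𝓝 0)) {u : ℝ} (hu : a < u) : F u ≤ 0 := by
  have hmono : MonotoneOn F (Ioi a) := by
    refine monotoneOn_of_deriv_nonneg (convex_Ioi a)
      (fun v hv => (hF v hv).continuousAt.continuousWithinAt)
      (fun v hv => (hF v (by simpa using hv)).differentiableAt.differentiableWithinAt)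
      (fun v hv => ?_)
    rw [interior_Ioi] at hv
    exact (hF v hv).deriv ▸ hF' v hv
  refine ge_of_tendsto hlim ?_
  filter_upwards [eventually_ge_atTop u] with v hv
  exact hmono hu (hu.trans_le hv) hv

lemma apply_mul_le_of_sub_mul_deriv_apply_mul_le {φ H : ℝ → ℝ} {a x K : ℝ} (ha : 0 ≤ a) (hx : 0 < x)
    (hφ : ∀ l > 0, DifferentiableAt ℝ φ l) (hH : ∀ l > 0, H l = φ l - l * deriv φ l)
    (hlim : Tendsto (fun l => φ l / l) atTop (𝓝 0)) (hscal : ∀ l > a, H (l * x) ≤ K * H l)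
    {l : ℝ} (hl : a < l) : φ (l * x) ≤ K * φ l := by
  have hderiv : ∀ u > a, HasDerivAt (fun u => (φ (u * x) - K * φ u) / u)
      ((K * H u - H (u * x)) / u ^ 2) u := by
    intro u hu
    have hu0 : 0 < u := ha.trans_lt hu
    have hux : 0 < u * x := mul_pos hu0 hx
    have h1 : HasDerivAt (fun u => φ (u * x)) (deriv φ (u * x) * x) u :=
      (hφ _ hux).hasDerivAt.comp u (hasDerivAt_mul_const x)
    refine ((h1.sub ((hφ u hu0).hasDerivAt.const_mul K)).div (hasDerivAt_id u)
      hu0.ne').congr_deriv ?_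
    rw [hH u hu0, hH _ hux, Pi.sub_apply, id]
    ring
  have hlim' : Tendsto (fun u => (φ (u * x) - K * φ u) / u) atTop (𝓝 0) := by
    have h1 : Tendsto (fun u => x * (φ (u * x) / (u * x))) atTop (𝓝 (x * 0)) :=
      (hlim.comp (tendsto_id.atTop_mul_const hx)).const_mul x
    have h2 := h1.sub (hlim.const_mul K)
    simp only [mul_zero, sub_zero] at h2
    refine h2.congr' ?_
    filter_upwards [eventually_gt_atTop 0] with u hu
    field_simp
  have := nonpos_of_deriv_nonneg_of_tendsto_zero hderiv
    (fun u hu => div_nonneg (sub_nonneg.mpr (hscal u hu)) (sq_nonneg u)) hlim' hl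
  have hl0 : 0 < l := ha.trans_lt hl
  rw [div_le_iff₀ hl0, zero_mul, sub_nonpos] at this
  exact this

theorem stmt4_general (μ : Measure ℝ)
    (hμ : ∫⁻ t in Ioi (0:ℝ), ENNReal.ofReal (min 1 t) ∂μ < ⊤)
    (φ H : ℝ → ℝ)
    (hφ : ∀ l > 0, φ l = ∫ t in Ioi (0:ℝ), (1 - exp (-(l * t))) ∂μ)
    (hH : ∀ l > 0, H l = φ l - l * deriv φ l)
    (CU δ lU : ℝ) (hlU : 0 ≤ lU)
    (hscal : ∀ l > lU, ∀ x ≥ 1, H (l * x) ≤ CU * x ^ δ * H l) :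
    ∀ l > lU, ∀ x ≥ 1, φ (l * x) ≤ CU * x ^ δ * φ l := by
  intro l hl x hx
  have hμ' := integrableOn_min_one_of_lintegral_lt_top hμ
  have hdiff : ∀ l > 0, DifferentiableAt ℝ φ l := fun l hl =>
    (hasDerivAt_bernsteinFun hμ' hl).differentiableAt.congr_of_eventuallyEq
      (eventually_gt_nhds hl |>.mono hφ)
  have hlim : Tendsto (fun l => φ l / l) atTop (𝓝 0) :=
    (tendsto_bernsteinFun_div_atTop hμ').congr'
      (eventually_gt_atTop 0 |>.mono fun l hl => by simp only [hφ l hl, bernsteinFun])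
  exact apply_mul_le_of_sub_mul_deriv_apply_mul_le hlU (by linarith) hdiff hH hlim
    (fun l hl => hscal l hl x hx) hl

theorem stmt4 (μ : Measure ℝ)
    (hμ : ∫⁻ t in Ioi (0:ℝ), ENNReal.ofReal (min 1 t) ∂μ < ⊤)
    (φ H : ℝ → ℝ)
    (hφ : ∀ l > 0, φ l = ∫ t in Ioi (0:ℝ), (1 - exp (-(l * t))) ∂μ)
    (hH : ∀ l > 0, H l = φ l - l * deriv φ l)
    (CU δ lU : ℝ) (hCU : 0 < CU) (hδ : 0 < δ) (hlU : 0 ≤ lU)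
    (hscal : ∀ l > lU, ∀ x ≥ 1, H (l * x) ≤ CU * x ^ δ * H l) :
    ∀ l > lU, ∀ x ≥ 1, φ (l * x) ≤ CU * x ^ δ * φ l :=
  stmt4_general μ hμ φ H hφ hH CU δ lU hlU hscal
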